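/- arXiv:1801.08155 — 3 statements merged into one kernel-verified Lean document; each statement's English description precedes it below -/
import Mathlib

section
/- Let E be a nontrivial real normed vector space, let a ∈ E and d > 0. Define D_S², D_B² : E → ℝ by D_S²(z) = (‖z − a‖ − d)² and D_B²(z) = (max(‖z − a‖ − d, 0))². Then: (i) D_B² is convex; (ii) D_B²(z) ≤ D_S²(z) for all z; and (iii) for every convex function g : E → ℝ with g(z) ≤ D_S²(z) for all z, one has g(z) ≤ D_B²(z) for all z. In other words, D_B² is the convex envelope (the largest convex underestimator) of the squared distance to the sphere D_S². -/
/-!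
`D_B²` is the square of the nonnegative convex function `max (‖z - a‖ - d) 0`, hence convex.
A convex `g ≤ D_S²` is `≤ 0` on the sphere, where `D_S²` vanishes. Since `E` is nontrivial,
the closed ball is the convex hull of the sphere, so by the maximum principle for convex
functions `g ≤ 0 = D_B²` on the ball; outside the ball `D_B² = D_S²`.
-/

open Set Metric

theorem max_zero_sq_le_sq (x : ℝ) : max x 0 ^ 2 ≤ x ^ 2 := by
  rcases le_total 0 x with h | h
  · rw [max_eq_left h]
  · rw [max_eq_right h]
    simpa using sq_nonneg x

section NormedSpace

variable {E : Type*} [NormedAddCommGroup E] [NormedSpace ℝ E]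

theorem convexOn_univ_sq_max_norm_sub_sub_zero (a : E) (d : ℝ) :
    ConvexOn ℝ univ fun z : E => max (‖z - a‖ - d) 0 ^ 2 := by
  have hmax : ConvexOn ℝ univ fun z : E => max (‖z - a‖ - d) 0 :=
    (((convexOn_univ_dist a).sub (concaveOn_const d convex_univ)).sup
      (convexOn_const 0 convex_univ)).congr fun z _ => by simp [dist_eq_norm]
  exact hmax.pow (fun _ _ => le_max_right _ _) 2

theorem ConvexOn.le_of_mem_closedBall [Nontrivial E] {g : E → ℝ} {a : E} {r c : ℝ}
    (hg : ConvexOn ℝ (closedBall a r) g) (hsphere : ∀ y ∈ sphere a r, g y ≤ c) {z : E}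
    (hz : z ∈ closedBall a r) : g z ≤ c := by
  have hr : 0 ≤ r := dist_nonneg.trans hz
  rw [← convexHull_sphere_eq_closedBall a hr] at hg hz
  obtain ⟨y, hy, hzy⟩ := hg.exists_ge_of_mem_convexHull (subset_convexHull ℝ _) hz
  exact hzy.trans (hsphere y hy)

end NormedSpace

theorem ball_sq_dist_is_convex_envelope_general {E : Type*} [NormedAddCommGroup E]
    [NormedSpace ℝ E] [Nontrivial E] (a : E) (d : ℝ) :
    ConvexOn ℝ Set.univ (fun z : E => (max (‖z - a‖ - d) 0) ^ 2) ∧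
      (∀ z : E, (max (‖z - a‖ - d) 0) ^ 2 ≤ (‖z - a‖ - d) ^ 2) ∧
      ∀ g : E → ℝ, ConvexOn ℝ Set.univ g → (∀ z : E, g z ≤ (‖z - a‖ - d) ^ 2) →
        ∀ z : E, g z ≤ (max (‖z - a‖ - d) 0) ^ 2 := by
  refine ⟨convexOn_univ_sq_max_norm_sub_sub_zero a d, fun z => max_zero_sq_le_sq _,
    fun g hg hle z => ?_⟩
  rcases le_total d ‖z - a‖ with h | h
  · rw [max_eq_left (sub_nonneg.2 h)]
    exact hle z
  · rw [max_eq_right (sub_nonpos.2 h)]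
    refine (hg.subset (subset_univ _) (convex_closedBall a d)).le_of_mem_closedBall
      (fun y hy => ?_) (mem_closedBall_iff_norm.2 h)
    simpa [mem_sphere_iff_norm.1 hy] using hle y

/-- The squared distance to the closed ball, `D_B²(z) = (max (‖z-a‖-d) 0)²`, is the convex
envelope (the largest convex underestimator) of the squared distance to the sphere,
`D_S²(z) = (‖z-a‖-d)²`: it is convex, it underestimates `D_S²` pointwise, and any convex
function `g` underestimating `D_S²` also underestimates `D_B²`. -/
theorem ball_sq_dist_is_convex_envelope {E : Type*} [NormedAddCommGroup E]
    [NormedSpace ℝ E] [Nontrivial E] (a : E) (d : ℝ) (hd : 0 < d) :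
    ConvexOn ℝ Set.univ (fun z : E => (max (‖z - a‖ - d) 0) ^ 2) ∧
      (∀ z : E, (max (‖z - a‖ - d) 0) ^ 2 ≤ (‖z - a‖ - d) ^ 2) ∧
      ∀ g : E → ℝ, ConvexOn ℝ Set.univ g → (∀ z : E, g z ≤ (‖z - a‖ - d) ^ 2) →
        ∀ z : E, g z ≤ (max (‖z - a‖ - d) 0) ^ 2 :=
  ball_sq_dist_is_convex_envelope_general a d
end

section
/- Let E and F be real Hilbert spaces, let A : E → F be a continuous linear map with adjoint A*, and let L ⊆ F be a nonempty closed convex set with metric projection P_L. Define ψ : E → ℝ by ψ(x) = (1/2)·(infDist(A x, L))². Then ψ is Fréchet differentiable at every x ∈ E with gradient ∇ψ(x) = A*(A x − P_L(A x)), and ∇ψ is Lipschitz continuous with Lipschitz constant ‖A‖² (the square of the operator norm of A). -/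
/-!
Write `f z = ½ infDist(z, L)²` and `g z = z - P z`. Since `P z` is a nearest point of the convex
set `L`, it satisfies the variational inequality `⟪z - P z, w - P z⟫ ≤ 0` for `w ∈ L`, which makes
`g` firmly nonexpansive: `‖g y - g z‖² ≤ ⟪g y - g z, y - z⟫`. Bounding `infDist y L` by
`‖y - P z‖` gives `f y ≤ f z + ⟪g z, y - z⟫ + ½‖y - z‖²`; the same bound with `y` and `z`
swapped, together with the monotonicity of `g`, gives the matching lower bound. Hence `g` is the
gradient of `f`, and the chain rule yields `∇(f ∘ A) = A* ∘ g ∘ A`, which is Lipschitz with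
constant `‖A*‖ · 1 · ‖A‖ = ‖A‖²`.
-/

open Metric InnerProductSpace Filter Topology Asymptotics
open scoped RealInnerProductSpace

section Projection

variable {F : Type*} [NormedAddCommGroup F] [InnerProductSpace ℝ F]

theorem real_inner_sub_le_zero_of_dist_eq_infDist {L : Set F} (hconv : Convex ℝ L) {z p w : F}
    (hp : p ∈ L) (hdist : dist z p = infDist z L) (hw : w ∈ L) :
    ⟪z - p, w - p⟫ ≤ 0 := by
  refine (norm_eq_iInf_iff_real_inner_le_zero hconv hp).mp ?_ w hw
  simpa [infDist_eq_iInf, dist_eq_norm] using hdist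

theorem sq_norm_sub_sub_sub_le_inner {y z p q : F}
    (hy : ⟪y - p, q - p⟫ ≤ 0) (hz : ⟪z - q, p - q⟫ ≤ 0) :
    ‖(y - p) - (z - q)‖ ^ 2 ≤ ⟪(y - p) - (z - q), y - z⟫ := by
  set u := (y - p) - (z - q)
  have hpq : ⟪u, p - q⟫ = -⟪y - p, q - p⟫ - ⟪z - q, p - q⟫ := by
    rw [← inner_neg_right, neg_sub, ← inner_sub_left]
  calc ‖u‖ ^ 2 ≤ ‖u‖ ^ 2 + ⟪u, p - q⟫ := by linarith
    _ = ⟪u, y - z⟫ := by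
      rw [← real_inner_self_eq_norm_sq, ← inner_add_right]
      congr 1; simp only [u]; abel

theorem half_sq_infDist_le {L : Set F} {y z p : F} (hp : p ∈ L)
    (hdist : dist z p = infDist z L) :
    1 / 2 * infDist y L ^ 2 ≤ 1 / 2 * infDist z L ^ 2 + ⟪z - p, y - z⟫ + 1 / 2 * ‖y - z‖ ^ 2 := by
  have hle : infDist y L ≤ ‖(z - p) + (y - z)‖ := by
    rw [show z - p + (y - z) = y - p by abel, ← dist_eq_norm]
    exact infDist_le_dist_of_mem hp
  have hsq := pow_le_pow_left₀ infDist_nonneg hle 2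
  rw [norm_add_sq_real, ← dist_eq_norm, hdist] at hsq
  linarith

variable {L : Set F} {P : F → F} (hconv : Convex ℝ L)
  (hP : ∀ z : F, P z ∈ L ∧ dist z (P z) = infDist z L)
include hconv hP

theorem norm_sq_sub_proj_le_inner (y z : F) :
    ‖(y - P y) - (z - P z)‖ ^ 2 ≤ ⟪(y - P y) - (z - P z), y - z⟫ :=
  sq_norm_sub_sub_sub_le_inner
    (real_inner_sub_le_zero_of_dist_eq_infDist hconv (hP y).1 (hP y).2 (hP z).1)
    (real_inner_sub_le_zero_of_dist_eq_infDist hconv (hP z).1 (hP z).2 (hP y).1)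

theorem lipschitzWith_one_sub_proj : LipschitzWith 1 fun z => z - P z := by
  refine LipschitzWith.of_dist_le_mul fun y z => ?_
  rw [NNReal.coe_one, one_mul, dist_eq_norm, dist_eq_norm]
  set u := (y - P y) - (z - P z)
  have h : ‖u‖ ^ 2 ≤ ‖u‖ * ‖y - z‖ :=
    (norm_sq_sub_proj_le_inner hconv hP y z).trans (real_inner_le_norm _ _)
  nlinarith [norm_nonneg u, norm_nonneg (y - z)]

theorem abs_half_sq_infDist_sub_le (y z : F) :
    |1 / 2 * infDist y L ^ 2 - 1 / 2 * infDist z L ^ 2 - ⟪z - P z, y - z⟫|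
      ≤ 1 / 2 * ‖y - z‖ ^ 2 := by
  have hupper := half_sq_infDist_le (y := y) (hP z).1 (hP z).2
  have hlower := half_sq_infDist_le (y := z) (hP y).1 (hP y).2
  have hmono : 0 ≤ ⟪(y - P y) - (z - P z), y - z⟫ :=
    (sq_nonneg _).trans (norm_sq_sub_proj_le_inner hconv hP y z)
  rw [← neg_sub y z, inner_neg_right, norm_neg] at hlower
  rw [inner_sub_left] at hmono
  rw [abs_le]; constructor <;> linarith

variable [CompleteSpace F] in
theorem hasGradientAt_half_sq_infDist (z : F) :
    HasGradientAt (fun y => 1 / 2 * infDist y L ^ 2) (z - P z) z := by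
  rw [hasGradientAt_iff_isLittleO]
  have hsq : (fun y => ‖y - z‖ ^ 2) =o[𝓝 z] fun y => y - z :=
    (isLittleO_norm_pow_id one_lt_two).comp_tendsto (tendsto_sub_nhds_zero_iff.mpr tendsto_id)
  refine IsBigO.trans_isLittleO (IsBigO.of_bound (1 / 2) (Eventually.of_forall fun y => ?_)) hsq
  simpa [Real.norm_eq_abs] using abs_half_sq_infDist_sub_le hconv hP y z

end Projection

theorem HasGradientAt.comp_continuousLinearMap {E F : Type*}
    [NormedAddCommGroup E] [InnerProductSpace ℝ E] [CompleteSpace E]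
    [NormedAddCommGroup F] [InnerProductSpace ℝ F] [CompleteSpace F]
    {f : F → ℝ} {g : F} (A : E →L[ℝ] F) {x : E} (hf : HasGradientAt f g (A x)) :
    HasGradientAt (f ∘ A) (ContinuousLinearMap.adjoint A g) x := by
  rw [hasGradientAt_iff_hasFDerivAt] at hf ⊢
  have hdual : (toDual ℝ F g).comp A = toDual ℝ E (ContinuousLinearMap.adjoint A g) := by
    ext v
    exact (ContinuousLinearMap.adjoint_inner_left A v g).symm
  exact hdual ▸ hf.comp x A.hasFDerivAt

theorem gradient_half_sq_infDist_comp_linear_general {E F : Type*}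
    [NormedAddCommGroup E] [InnerProductSpace ℝ E] [CompleteSpace E]
    [NormedAddCommGroup F] [InnerProductSpace ℝ F] [CompleteSpace F]
    (A : E →L[ℝ] F) (L : Set F)
    (hconv : Convex ℝ L)
    (P : F → F) (hP : ∀ z : F, P z ∈ L ∧ dist z (P z) = Metric.infDist z L) :
    (∀ x : E,
      HasGradientAt (fun w : E => (1 / 2) * (Metric.infDist (A w) L) ^ 2)
        ((ContinuousLinearMap.adjoint A) (A x - P (A x))) x) ∧
      LipschitzWith (‖A‖₊ ^ 2)
        (gradient fun w : E => (1 / 2) * (Metric.infDist (A w) L) ^ 2) := by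
  have hgrad (x : E) : HasGradientAt (fun w : E => (1 / 2) * (Metric.infDist (A w) L) ^ 2)
      ((ContinuousLinearMap.adjoint A) (A x - P (A x))) x :=
    (hasGradientAt_half_sq_infDist hconv hP (A x)).comp_continuousLinearMap A
  refine ⟨hgrad, ?_⟩
  rw [gradient_eq hgrad]
  have hlip := (ContinuousLinearMap.adjoint A).lipschitz.comp
    ((lipschitzWith_one_sub_proj hconv hP).comp A.lipschitz)
  rwa [LinearIsometryEquiv.nnnorm_map, one_mul, ← sq] at hlip

/-- For real Hilbert spaces `E`, `F`, a continuous linear map `A : E → F`, and a nonempty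
closed convex set `L ⊆ F` with metric projection `P`, the function
`ψ(x) = (1/2)(infDist (A x) L)²` is Fréchet differentiable with gradient
`∇ψ(x) = A* (A x - P (A x))`, and `∇ψ` is Lipschitz with constant `‖A‖²`. -/
theorem gradient_half_sq_infDist_comp_linear {E F : Type*}
    [NormedAddCommGroup E] [InnerProductSpace ℝ E] [CompleteSpace E]
    [NormedAddCommGroup F] [InnerProductSpace ℝ F] [CompleteSpace F]
    (A : E →L[ℝ] F) (L : Set F) (hne : L.Nonempty) (hcl : IsClosed L)
    (hconv : Convex ℝ L)
    (P : F → F) (hP : ∀ z : F, P z ∈ L ∧ dist z (P z) = Metric.infDist z L) :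
    (∀ x : E,
      HasGradientAt (fun w : E => (1 / 2) * (Metric.infDist (A w) L) ^ 2)
        ((ContinuousLinearMap.adjoint A) (A x - P (A x))) x) ∧
      LipschitzWith (‖A‖₊ ^ 2)
        (gradient fun w : E => (1 / 2) * (Metric.infDist (A w) L) ^ 2) :=
  gradient_half_sq_infDist_comp_linear_general A L hconv P hP
end

section
/- Let n ≥ 1, m ≥ 1, and let {1, …, m} be partitioned into index sets R and T. Let a_1, …, a_m ∈ ℝⁿ, let d_k > 0 for k ∈ R, and let u_j ∈ ℝⁿ with ‖u_j‖ = 1 for j ∈ T. Define f : ℝⁿ → ℝ by f(x) = Σ_{k∈R} (‖x − a_k‖ − d_k)² + Σ_{j∈T} (infDist(x, {a_j + t·u_j : t ∈ ℝ}))². Then inf_{x∈ℝⁿ} f(x) equals the infimum, over all unit vectors θ_k ∈ ℝⁿ (k ∈ R) and scalars t_j ∈ ℝ (j ∈ T), of Σ_{k=1}^m ‖y_k − ȳ‖², where y_k = a_k + d_k·θ_k for k ∈ R, y_j = a_j + t_j·u_j for j ∈ T, and ȳ = (1/m)·Σ_{k=1}^m y_k is the centroid of the y_k. -/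
/-!
Both infima equal the infimum of `∑ₖ ‖x - yₖ‖²` taken jointly over `x` and over constellations
`(yₖ)` with each `yₖ` on its sphere or line. For fixed `x` the infimum over the constellations is
attained at nearest points and equals `f x` (lines are closed, so in finite dimension nearest
points exist); for fixed `(yₖ)` the infimum over `x` is attained at the centroid `ȳ` and equals
`∑ₖ ‖yₖ - ȳ‖²`, by the parallel-axis identity.
-/

open Finset Metric

section Normed

variable {E : Type*} [NormedAddCommGroup E] [NormedSpace ℝ E]

theorem sq_norm_sub_sub_le_sq_norm_sub_add_smul {x a θ : E} {d : ℝ} (hd : 0 ≤ d)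
    (hθ : ‖θ‖ = 1) : (‖x - a‖ - d) ^ 2 ≤ ‖x - (a + d • θ)‖ ^ 2 := by
  have h := abs_norm_sub_norm_le (x - a) (d • θ)
  rw [norm_smul, hθ, mul_one, Real.norm_of_nonneg hd, sub_sub] at h
  exact sq_le_sq.2 (by rwa [abs_norm])

theorem exists_norm_eq_one_norm_sub_add_smul_eq [Nontrivial E] (x a : E) (d : ℝ) :
    ∃ θ : E, ‖θ‖ = 1 ∧ ‖x - (a + d • θ)‖ = |‖x - a‖ - d| := by
  by_cases hxa : x = a
  · obtain ⟨e, he⟩ := exists_norm_eq E zero_le_one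
    refine ⟨e, he, ?_⟩
    simp [hxa, norm_smul, he]
  · have hr : ‖x - a‖ ≠ 0 := norm_ne_zero_iff.2 (sub_ne_zero.2 hxa)
    refine ⟨‖x - a‖⁻¹ • (x - a), by rw [norm_smul, norm_inv, norm_norm, inv_mul_cancel₀ hr], ?_⟩
    have h : x - (a + d • ‖x - a‖⁻¹ • (x - a)) = (1 - d * ‖x - a‖⁻¹) • (x - a) := by
      rw [smul_smul, sub_smul, one_smul]; abel
    rw [h, norm_smul, Real.norm_eq_abs, ← abs_norm (x - a), ← abs_mul, abs_norm]
    congr 1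
    field_simp

def lineThrough (a u : E) : Set E := {y | ∃ t : ℝ, y = a + t • u}

theorem add_smul_mem_lineThrough (a u : E) (t : ℝ) : a + t • u ∈ lineThrough a u := ⟨t, rfl⟩

theorem lineThrough_eq_preimage_span (a u : E) : lineThrough a u = (· - a) ⁻¹' (ℝ ∙ u) := by
  ext y
  simp [lineThrough, Submodule.mem_span_singleton, eq_sub_iff_add_eq, add_comm, eq_comm]

theorem exists_infDist_lineThrough_eq_norm [FiniteDimensional ℝ E] (x a u : E) :
    ∃ t : ℝ, infDist x (lineThrough a u) = ‖x - (a + t • u)‖ := by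
  have hclosed : IsClosed (lineThrough a u) := by
    rw [lineThrough_eq_preimage_span]
    exact (Submodule.closed_of_finiteDimensional _).preimage (continuous_sub_right a)
  obtain ⟨_, ⟨t, rfl⟩, h⟩ :=
    hclosed.exists_infDist_eq_dist ⟨_, add_smul_mem_lineThrough a u 0⟩ x
  exact ⟨t, by rw [h, dist_eq_norm]⟩

end Normed

section Centroid

variable {E : Type*} [NormedAddCommGroup E] [InnerProductSpace ℝ E] {ι : Type*}

theorem sum_sub_centroid_eq_zero (s : Finset ι) (y : ι → E) :
    ∑ k ∈ s, (y k - (#s : ℝ)⁻¹ • ∑ l ∈ s, y l) = 0 := by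
  rcases s.eq_empty_or_nonempty with rfl | hs
  · simp
  rw [sum_sub_distrib, sum_const, ← Nat.cast_smul_eq_nsmul ℝ, smul_smul,
    mul_inv_cancel₀ (by simp [hs.ne_empty]), one_smul, sub_self]

theorem sum_norm_sub_sq_eq_sum_norm_sub_centroid_sq_add (s : Finset ι) (y : ι → E) (x : E) :
    ∑ k ∈ s, ‖x - y k‖ ^ 2
      = ∑ k ∈ s, ‖y k - (#s : ℝ)⁻¹ • ∑ l ∈ s, y l‖ ^ 2
        + #s * ‖x - (#s : ℝ)⁻¹ • ∑ l ∈ s, y l‖ ^ 2 := by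
  set c := (#s : ℝ)⁻¹ • ∑ l ∈ s, y l
  have hcross : ∑ k ∈ s, inner ℝ (y k - c) (x - c) = 0 := by
    rw [← sum_inner, sum_sub_centroid_eq_zero, inner_zero_left]
  have hk : ∀ k ∈ s,
      ‖x - y k‖ ^ 2 = ‖y k - c‖ ^ 2 - 2 * inner ℝ (y k - c) (x - c) + ‖x - c‖ ^ 2 := by
    intro k _
    rw [show x - y k = (x - c) - (y k - c) by abel, norm_sub_sq_real, real_inner_comm]
    ring
  rw [sum_congr rfl hk, sum_add_distrib, sum_sub_distrib, ← mul_sum, hcross, sum_const,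
    nsmul_eq_mul]
  ring

theorem sum_norm_sub_centroid_sq_le (s : Finset ι) (y : ι → E) (x : E) :
    ∑ k ∈ s, ‖y k - (#s : ℝ)⁻¹ • ∑ l ∈ s, y l‖ ^ 2 ≤ ∑ k ∈ s, ‖x - y k‖ ^ 2 := by
  rw [sum_norm_sub_sq_eq_sum_norm_sub_centroid_sq_add s y x]
  exact le_add_of_nonneg_right (by positivity)

end Centroid

theorem Finset.sum_ite_mem_of_isCompl {ι M : Type*} [Fintype ι] [DecidableEq ι] [AddCommMonoid M]
    {R T : Finset ι} (h : IsCompl R T) (f g : ι → M) :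
    ∑ k, (if k ∈ R then f k else g k) = ∑ k ∈ R, f k + ∑ k ∈ T, g k := by
  rw [sum_ite, ← h.compl_eq]
  simp [← compl_eq_univ_sdiff, filter_not]

section Floris

variable {ι E : Type*} [Fintype ι] [DecidableEq ι] [NormedAddCommGroup E] [NormedSpace ℝ E]
  (R T : Finset ι) (a : ι → E) (d : ι → ℝ) (u : ι → E)

noncomputable def florisCost (x : E) : ℝ :=
  ∑ k ∈ R, (‖x - a k‖ - d k) ^ 2 + ∑ j ∈ T, infDist x (lineThrough (a j) (u j)) ^ 2

def constellation (θ : ι → E) (t : ι → ℝ) (k : ι) : E :=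
  if k ∈ R then a k + d k • θ k else a k + t k • u k

variable {R T}

theorem florisCost_le_sum_norm_sub_sq (hRT : IsCompl R T) (hd : ∀ k ∈ R, 0 ≤ d k)
    {θ : ι → E} (hθ : ∀ k ∈ R, ‖θ k‖ = 1) (t : ι → ℝ) (x : E) :
    florisCost R T a d u x ≤ ∑ k, ‖x - constellation R a d u θ t k‖ ^ 2 := by
  rw [florisCost, ← sum_ite_mem_of_isCompl hRT]
  refine sum_le_sum fun k _ => ?_
  rw [constellation]
  split_ifs with hk
  · exact sq_norm_sub_sub_le_sq_norm_sub_add_smul (hd k hk) (hθ k hk)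
  · rw [← dist_eq_norm]
    exact pow_le_pow_left₀ infDist_nonneg
      (infDist_le_dist_of_mem (add_smul_mem_lineThrough _ _ (t k))) 2

theorem exists_florisCost_eq_sum_norm_sub_sq [Nontrivial E] [FiniteDimensional ℝ E]
    (hRT : IsCompl R T) (x : E) :
    ∃ (θ : ι → E) (t : ι → ℝ), (∀ k ∈ R, ‖θ k‖ = 1) ∧
      florisCost R T a d u x = ∑ k, ‖x - constellation R a d u θ t k‖ ^ 2 := by
  choose θ hθ hθx using fun k => exists_norm_eq_one_norm_sub_add_smul_eq x (a k) (d k)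
  choose t ht using fun k => exists_infDist_lineThrough_eq_norm x (a k) (u k)
  refine ⟨θ, t, fun k _ => hθ k, ?_⟩
  rw [florisCost, ← sum_ite_mem_of_isCompl hRT]
  refine sum_congr rfl fun k _ => ?_
  rw [constellation]
  split_ifs
  · rw [hθx, sq_abs]
  · rw [ht]

end Floris

theorem floris_reformulation_general (n m : ℕ) (hn : 1 ≤ n)
    (R T : Finset (Fin m)) (hpart : R ∪ T = Finset.univ) (hdisj : Disjoint R T)
    (a : Fin m → EuclideanSpace ℝ (Fin n))
    (d : Fin m → ℝ) (hd : ∀ k ∈ R, 0 < d k)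
    (u : Fin m → EuclideanSpace ℝ (Fin n)) :
    sInf {c : ℝ | ∃ x : EuclideanSpace ℝ (Fin n),
        c = ∑ k ∈ R, (‖x - a k‖ - d k) ^ 2
          + ∑ j ∈ T,
              (Metric.infDist x {y : EuclideanSpace ℝ (Fin n) | ∃ t : ℝ, y = a j + t • u j}) ^ 2}
      = sInf {c : ℝ | ∃ (θ : Fin m → EuclideanSpace ℝ (Fin n)) (t : Fin m → ℝ),
          (∀ k ∈ R, ‖θ k‖ = 1) ∧
          c = ∑ k,
            ‖(if k ∈ R then a k + d k • θ k else a k + t k • u k)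
              - (m : ℝ)⁻¹ •
                  ∑ l, (if l ∈ R then a l + d l • θ l else a l + t l • u l)‖ ^ 2} := by
  have : Nonempty (Fin n) := ⟨⟨0, hn⟩⟩
  have hRT : IsCompl R T := ⟨hdisj, codisjoint_iff.2 hpart⟩
  have hcard : (#(univ : Finset (Fin m)) : ℝ) = m := by simp
  apply csInf_eq_csInf_of_forall_exists_le
  · rintro _ ⟨x, rfl⟩
    obtain ⟨θ, t, hθ, hx⟩ := exists_florisCost_eq_sum_norm_sub_sq a d u hRT x
    refine ⟨_, ⟨θ, t, hθ, rfl⟩, ?_⟩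
    have hvar := sum_norm_sub_centroid_sq_le univ (constellation R a d u θ t) x
    rw [hcard] at hvar
    exact hvar.trans hx.ge
  · rintro _ ⟨θ, t, hθ, rfl⟩
    refine ⟨_, ⟨(m : ℝ)⁻¹ • ∑ l, constellation R a d u θ t l, rfl⟩, ?_⟩
    refine (florisCost_le_sum_norm_sub_sq a d u hRT (fun k hk => (hd k hk).le) hθ t _).trans ?_
    simp_rw [norm_sub_rev _ ((m : ℝ)⁻¹ • _)]
    rfl

/-- The optimal value of the FLORIS single-source hybrid cost
`f(x) = ∑_{k∈R} (‖x - aₖ‖ - dₖ)² + ∑_{j∈T} infDist(x, line through aⱼ with direction uⱼ)²`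
equals the optimal value of its closest-point reformulation: the infimum, over unit vectors
`θₖ` (k ∈ R) and scalars `tⱼ` (j ∈ T), of `∑ₖ ‖yₖ - ȳ‖²`, where `yₖ = aₖ + dₖ • θₖ` for
`k ∈ R`, `yⱼ = aⱼ + tⱼ • uⱼ` for `j ∈ T`, and `ȳ` is the centroid of the `yₖ`. -/
theorem floris_reformulation (n m : ℕ) (hn : 1 ≤ n) (hm : 1 ≤ m)
    (R T : Finset (Fin m)) (hpart : R ∪ T = Finset.univ) (hdisj : Disjoint R T)
    (a : Fin m → EuclideanSpace ℝ (Fin n))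
    (d : Fin m → ℝ) (hd : ∀ k ∈ R, 0 < d k)
    (u : Fin m → EuclideanSpace ℝ (Fin n)) (hu : ∀ j ∈ T, ‖u j‖ = 1) :
    sInf {c : ℝ | ∃ x : EuclideanSpace ℝ (Fin n),
        c = ∑ k ∈ R, (‖x - a k‖ - d k) ^ 2
          + ∑ j ∈ T,
              (Metric.infDist x {y : EuclideanSpace ℝ (Fin n) | ∃ t : ℝ, y = a j + t • u j}) ^ 2}
      = sInf {c : ℝ | ∃ (θ : Fin m → EuclideanSpace ℝ (Fin n)) (t : Fin m → ℝ),
          (∀ k ∈ R, ‖θ k‖ = 1) ∧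
          c = ∑ k,
            ‖(if k ∈ R then a k + d k • θ k else a k + t k • u k)
              - (m : ℝ)⁻¹ •
                  ∑ l, (if l ∈ R then a l + d l • θ l else a l + t l • u l)‖ ^ 2} :=
  floris_reformulation_general n m hn R T hpart hdisj a d hd u
end
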